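/- arXiv:2405.15076 — 3 statements merged into one kernel-verified Lean document; each statement's English description precedes it below -/
import Mathlib

section
/- Let p be a prime and a an integer with a² < 4p. Suppose α ∈ ℚ_p satisfies α² − a·α + p = 0 (note α ≠ 0 automatically). Let G be any finite commutative group and σ ∈ G. Then the element 1 − α⁻¹·σ is a unit in the group algebra ℚ_p[G]. -/
/-- Integer coefficients expressing `α^k = b k * α + c k` where `α² = aα - p`. -/
private def seqBC (a p : ℤ) : ℕ → ℤ × ℤ
  | 0 => (0, 1)
  | k+1 => (a * (seqBC a p k).1 + (seqBC a p k).2, -p * (seqBC a p k).1)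

private lemma pow_ne_one (p : ℕ) [Fact p.Prime] (a : ℤ)
    (ha : a ^ 2 < 4 * (p : ℤ)) (α : ℚ_[p]) (hα : α ^ 2 - (a : ℚ_[p]) * α + p = 0)
    (n : ℕ) (hn : 0 < n) : α ^ n ≠ 1 := by
  intro h1
  have key : ∀ k, α ^ k = ((seqBC a p k).1 : ℚ_[p]) * α + ((seqBC a p k).2 : ℚ_[p]) := by
    intro k
    induction k with
    | zero => simp [seqBC]
    | succ k ih =>
      rw [pow_succ, ih, seqBC]
      push_cast
      linear_combination ((seqBC a p k).1 : ℚ_[p]) * hα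
  have hkey := key n
  rw [h1] at hkey
  by_cases hb : (seqBC a p n).1 = 0
  · -- then c n = 1, but c n = -p * b (n-1)
    have hc : ((seqBC a p n).2 : ℚ_[p]) = 1 := by
      rw [hb] at hkey; linear_combination -hkey
    have hc' : (seqBC a p n).2 = 1 := by exact_mod_cast hc
    obtain ⟨m, rfl⟩ := Nat.exists_eq_succ_of_ne_zero hn.ne'
    have : (1 : ℤ) = -(p : ℤ) * (seqBC a p m).1 := by
      rw [← hc']; rfl
    have hdvd : (p : ℤ) ∣ 1 := ⟨-(seqBC a p m).1, by linarith⟩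
    have hp2 : 2 ≤ p := (Fact.out : p.Prime).two_le
    have := Int.le_of_dvd one_pos hdvd
    omega
  · -- α is rational, contradiction with negative discriminant
    set b := (seqBC a p n).1
    set c := (seqBC a p n).2
    set q : ℚ := (1 - c) / b with hq
    have hbq : (b : ℚ) ≠ 0 := Int.cast_ne_zero.mpr hb
    have hαq : α = (q : ℚ_[p]) := by
      rw [hq]
      push_cast
      rw [eq_div_iff (by exact_mod_cast hbq)]
      linear_combination -hkey
    rw [hαq] at hα
    have hα' : ((q ^ 2 - (a : ℚ) * q + p : ℚ) : ℚ_[p]) = 0 := by push_cast; linear_combination hα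
    have hq0 : q ^ 2 - (a : ℚ) * q + p = 0 := by exact_mod_cast hα'
    have haq : (a : ℚ) ^ 2 < 4 * (p : ℚ) := by exact_mod_cast ha
    nlinarith [sq_nonneg (2 * q - (a : ℚ))]

/-- **Group-ring invertibility, part 1.**
Let `p` be a prime, `a ∈ ℤ` with `a² < 4p`, and `α ∈ ℚ_p` a root of
`X² - aX + p`.  For any finite commutative group `G` and `σ ∈ G`, the element
`1 - α⁻¹·σ` is a unit in the group algebra `ℚ_p[G]`. -/
theorem one_sub_inv_root_smul_isUnit (p : ℕ) [Fact p.Prime] (a : ℤ)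
    (ha : a ^ 2 < 4 * (p : ℤ)) (α : ℚ_[p]) (hα : α ^ 2 - (a : ℚ_[p]) * α + p = 0)
    (G : Type*) [CommGroup G] [Fintype G] (σ : G) :
    IsUnit ((1 : MonoidAlgebra ℚ_[p] G) - MonoidAlgebra.single σ α⁻¹) := by
  have hp0 : (p : ℚ_[p]) ≠ 0 := by
    exact_mod_cast Nat.cast_ne_zero.mpr (Fact.out : p.Prime).ne_zero
  have hα0 : α ≠ 0 := by
    intro h
    rw [h] at hα
    simp at hα
    exact (Fact.out : p.Prime).ne_zero hα
  set n := orderOf σ with hn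
  have hnpos : 0 < n := orderOf_pos σ
  have hne : α ^ n ≠ 1 := pow_ne_one p a ha α hα n hnpos
  set x : MonoidAlgebra ℚ_[p] G := MonoidAlgebra.single σ α⁻¹ with hx
  have hxn : x ^ n = algebraMap ℚ_[p] (MonoidAlgebra ℚ_[p] G) ((α ^ n)⁻¹) := by
    rw [hx, MonoidAlgebra.single_pow, pow_orderOf_eq_one σ, inv_pow]
    rfl
  have hc : (1 : ℚ_[p]) - (α ^ n)⁻¹ ≠ 0 := by
    intro h
    apply hne
    have h2 : (α ^ n)⁻¹ = 1 := by linear_combination -h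
    exact inv_eq_one.mp h2
  have hunit : IsUnit ((1 : MonoidAlgebra ℚ_[p] G) - x ^ n) := by
    rw [hxn]
    have : (1 : MonoidAlgebra ℚ_[p] G) - algebraMap ℚ_[p] (MonoidAlgebra ℚ_[p] G) ((α ^ n)⁻¹)
        = algebraMap ℚ_[p] (MonoidAlgebra ℚ_[p] G) (1 - (α ^ n)⁻¹) := by
      rw [map_sub, map_one]
    rw [this]
    exact (IsUnit.mk0 _ hc).map (algebraMap ℚ_[p] (MonoidAlgebra ℚ_[p] G))
  refine isUnit_of_dvd_unit ?_ hunit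
  have := sub_dvd_pow_sub_pow (1 : MonoidAlgebra ℚ_[p] G) x n
  simpa using this
end

section
/- Let p > 3 be a prime and a an integer with a² < 4p. Suppose α ∈ ℚ_p satisfies α² − a·α + p = 0. Let G be any finite commutative group and σ ∈ G. Then the element 1 − α⁻¹·σ − α⁻¹·σ⁻¹ is a unit in the group algebra ℚ_p[G]. -/
/-! Multiplying by the unit `-α⁻¹σ⁻¹` turns the element into `f(σ)` with `f = X² - αX + 1`, and
`σ` is killed by `Xⁿ - 1`, so it suffices that `f` is coprime to `Xⁿ - 1`. With `β = a - α`,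
`f · (X² - βX + 1) = X² h(X + X⁻¹)` for `h = X² - aX + b` is a rational polynomial. At an
`n`-th root of unity `z` we have `z + z⁻¹ = 2 re z`, a real number, and `h` has no real root
because `a² < 4b`. -/

open Polynomial

/-- `X² · h(X + X⁻¹)` for `h = X² - aX + b`. -/
noncomputable def palindromicQuartic {R : Type*} [CommRing R] (a b : R) : R[X] :=
  X ^ 4 - C a * X ^ 3 + C (b + 2) * X ^ 2 - C a * X + 1

section palindromicQuartic

variable {R S : Type*} [CommRing R] [CommRing S]

theorem map_palindromicQuartic (f : R →+* S) (a b : R) :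
    (palindromicQuartic a b).map f = palindromicQuartic (f a) (f b) := by
  simp [palindromicQuartic, map_ofNat]

theorem palindromicQuartic_eq_mul {a b α β : R} (hsum : α + β = a) (hprod : α * β = b) :
    palindromicQuartic a b = (X ^ 2 - C α * X + 1) * (X ^ 2 - C β * X + 1) := by
  simp only [palindromicQuartic, ← hsum, ← hprod, C_add, C_mul, C_ofNat]
  ring

end palindromicQuartic

theorem eval_palindromicQuartic_ne_zero_of_norm_eq_one {a b : ℝ} (h : a ^ 2 < 4 * b) {z : ℂ}
    (hz : ‖z‖ = 1) : (palindromicQuartic (a : ℂ) b).eval z ≠ 0 := by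
  have hz0 : z ≠ 0 := norm_ne_zero_iff.mp (hz ▸ one_ne_zero)
  have hmul : z * (starRingEnd ℂ) z = 1 := by
    rw [RCLike.mul_conj, hz]; norm_num
  have hadd : z + (starRingEnd ℂ) z = 2 * (z.re : ℂ) := by
    rw [Complex.add_conj]; push_cast; ring
  have hquad : (2 * z.re) ^ 2 - a * (2 * z.re) + b ≠ 0 := by
    nlinarith [sq_nonneg (4 * z.re - a)]
  -- On the unit circle `z⁻¹ = conj z`, so the quartic is `z² h(2 re z)`.
  have hfactor : (palindromicQuartic (a : ℂ) b).eval z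
      = z ^ 2 * (((2 * z.re) ^ 2 - a * (2 * z.re) + b : ℝ) : ℂ) := by
    simp only [palindromicQuartic, eval_add, eval_sub, eval_mul, eval_pow, eval_C, eval_X,
      eval_one]
    push_cast
    linear_combination (-(2 * z ^ 2 - a * z + 1 + z * (starRingEnd ℂ) z)) * hmul
      + z ^ 2 * (z + (starRingEnd ℂ) z + 2 * z.re - a) * hadd
  rw [hfactor]
  exact mul_ne_zero (pow_ne_zero 2 hz0) (Complex.ofReal_ne_zero.mpr hquad)

theorem isCoprime_palindromicQuartic_X_pow_sub_one {a b : ℚ} (h : a ^ 2 < 4 * b) {n : ℕ}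
    (hn : n ≠ 0) : IsCoprime (palindromicQuartic a b) (X ^ n - 1) := by
  rw [isCoprime_iff_aeval_ne_zero_of_isAlgClosed ℚ ℂ]
  intro z
  by_cases hz : z ^ n = 1
  · left
    have h' : (a : ℝ) ^ 2 < 4 * b := by exact_mod_cast h
    simpa [aeval_def, eval₂_eq_eval_map, map_palindromicQuartic] using
      eval_palindromicQuartic_ne_zero_of_norm_eq_one h' (Complex.norm_eq_one_of_pow_eq_one hz hn)
  · right
    simpa [sub_eq_zero] using hz

theorem isCoprime_X_sq_sub_C_mul_X_add_one_X_pow_sub_one {K : Type*} [Field K] [CharZero K]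
    {a b : ℚ} (h : a ^ 2 < 4 * b) {α : K} (hα : α ^ 2 - a * α + b = 0) {n : ℕ} (hn : n ≠ 0) :
    IsCoprime (X ^ 2 - C α * X + 1) (X ^ n - 1 : K[X]) := by
  have hfactor : palindromicQuartic (a : K) b
      = (X ^ 2 - C α * X + 1) * (X ^ 2 - C (a - α) * X + 1) :=
    palindromicQuartic_eq_mul (add_sub_cancel α a) (by linear_combination -hα)
  have := (isCoprime_palindromicQuartic_X_pow_sub_one h hn).map (mapRingHom (algebraMap ℚ K))
  simp only [coe_mapRingHom, map_palindromicQuartic, eq_ratCast, Polynomial.map_sub,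
    Polynomial.map_pow, map_X, Polynomial.map_one, hfactor] at this
  exact this.of_mul_left_left

theorem IsCoprime.isUnit_aeval_of_aeval_eq_zero {R A : Type*} [CommRing R] [Ring A] [Algebra R A]
    {p q : R[X]} (h : IsCoprime p q) {x : A} (hq : aeval x q = 0) : IsUnit (aeval x p) := by
  obtain ⟨u, v, huv⟩ := h
  have hup : aeval x u * aeval x p = 1 := by
    simpa [hq] using congrArg (aeval x) huv
  refine ⟨⟨aeval x p, aeval x u, ?_, hup⟩, rfl⟩
  rw [← map_mul, mul_comm, map_mul, hup]

theorem MonoidAlgebra.isUnit_single {k G : Type*} [DivisionRing k] [Group G] (g : G) {c : k}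
    (hc : c ≠ 0) : IsUnit (single g c) :=
  ⟨⟨_, single g⁻¹ c⁻¹, by simp [hc, ← one_def], by simp [hc, ← one_def]⟩, rfl⟩

section

variable {K A : Type*} [Field K] [CharZero K] [Ring A] [Algebra K A] {a b : ℚ} {α : K}

theorem isUnit_sq_sub_algebraMap_mul_add_one (h : a ^ 2 < 4 * b) (hα : α ^ 2 - a * α + b = 0)
    {t : A} {n : ℕ} (hn : n ≠ 0) (ht : t ^ n = 1) : IsUnit (t ^ 2 - algebraMap K A α * t + 1) := by
  simpa using (isCoprime_X_sq_sub_C_mul_X_add_one_X_pow_sub_one h hα hn)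
    |>.isUnit_aeval_of_aeval_eq_zero (x := t) (by simp [ht])

theorem MonoidAlgebra.isUnit_one_sub_single_sub_single_inv {G : Type*} [Group G] {σ : G}
    (hσ : IsOfFinOrder σ) (h : a ^ 2 < 4 * b) (hα : α ^ 2 - a * α + b = 0) :
    IsUnit (1 - single σ α⁻¹ - single σ⁻¹ α⁻¹ : MonoidAlgebra K G) := by
  have hα0 : α ≠ 0 := by
    rintro rfl
    have hb : (b : K) ≠ 0 := Rat.cast_ne_zero.mpr (by nlinarith)
    simp_all
  set t : MonoidAlgebra K G := of K G σ
  have hunit := isUnit_sq_sub_algebraMap_mul_add_one h hα hσ.orderOf_pos.ne'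
    (t := t) (by rw [← map_pow, pow_orderOf_eq_one, map_one])
  have hfactor : (1 - single σ α⁻¹ - single σ⁻¹ α⁻¹ : MonoidAlgebra K G)
      = single σ⁻¹ (-α⁻¹) * (t ^ 2 - algebraMap K _ α * t + 1) := by
    simp only [t, of_apply, coe_algebraMap, Function.comp_apply, Algebra.algebraMap_self,
      RingHom.id_apply, mul_add, mul_sub, mul_one, single_mul_single,
      one_mul, pow_two, inv_mul_cancel_left, inv_mul_cancel, neg_mul, inv_mul_cancel₀ hα0,
      single_neg, ← one_def]
    abel
  rw [hfactor]
  exact (isUnit_single σ⁻¹ (neg_ne_zero.mpr (inv_ne_zero hα0))).mul hunit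

end

theorem one_sub_inv_root_smul_sub_isUnit_general (p : ℕ) [Fact p.Prime] (a : ℤ)
    (ha : a ^ 2 < 4 * (p : ℤ)) (α : ℚ_[p]) (hα : α ^ 2 - (a : ℚ_[p]) * α + p = 0)
    (G : Type*) [CommGroup G] [Fintype G] (σ : G) :
    IsUnit ((1 : MonoidAlgebra ℚ_[p] G) - MonoidAlgebra.single σ α⁻¹
      - MonoidAlgebra.single σ⁻¹ α⁻¹) :=
  MonoidAlgebra.isUnit_one_sub_single_sub_single_inv (isOfFinOrder_of_finite σ)
    (a := a) (b := p) (by exact_mod_cast ha) (by exact_mod_cast hα)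

/-- **Group-ring invertibility, part 2.**
Let `p > 3` be a prime, `a ∈ ℤ` with `a² < 4p`, and `α ∈ ℚ_p` a root of
`X² - aX + p`.  For any finite commutative group `G` and `σ ∈ G`, the element
`1 - α⁻¹·σ - α⁻¹·σ⁻¹` is a unit in the group algebra `ℚ_p[G]`. -/
theorem one_sub_inv_root_smul_sub_isUnit (p : ℕ) [Fact p.Prime] (hp3 : 3 < p) (a : ℤ)
    (ha : a ^ 2 < 4 * (p : ℤ)) (α : ℚ_[p]) (hα : α ^ 2 - (a : ℚ_[p]) * α + p = 0)
    (G : Type*) [CommGroup G] [Fintype G] (σ : G) :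
    IsUnit ((1 : MonoidAlgebra ℚ_[p] G) - MonoidAlgebra.single σ α⁻¹
      - MonoidAlgebra.single σ⁻¹ α⁻¹) :=
  one_sub_inv_root_smul_sub_isUnit_general p a ha α hα G σ
end

section
/- Let R be a commutative ring, p a natural number, a ∈ R, and α a unit of R with α² − a·α + p·1 = 0 in R. Let M, N, P be R-modules, and let ν : M → N, t : N → M, t' : P → N be R-linear maps such that ν ∘ t = p·id_N. Suppose θ_M ∈ M, θ_N ∈ N, θ_P ∈ P satisfy the norm relation ν(θ_M) = a·θ_N − t'(θ_P). Then ν(θ_M − α⁻¹·t(θ_N)) = α·(θ_N − α⁻¹·t'(θ_P)); consequently, for every k ≥ 0, ν(α^{−(k+1)}·(θ_M − α⁻¹·t(θ_N))) = α^{−k}·(θ_N − α⁻¹·t'(θ_P)). -/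
/-!
Since `α² - aα + p = 0` and `α` is a unit, `α⁻¹ p = a - α`. Hence
`ν(θ_M - α⁻¹ t θ_N) = (a θ_N - t' θ_P) - (a - α) θ_N = α θ_N - t' θ_P`,
which is the first claim; the second follows by scaling with `α^{-(k+1)}`.
-/

theorem Units.inv_mul_eq_sub_of_sq_sub_mul_add_eq_zero {R : Type*} [CommRing R]
    {α : Rˣ} {a c : R} (h : (α : R) ^ 2 - a * α + c = 0) :
    ((α⁻¹ : Rˣ) : R) * c = a - α := by
  linear_combination ((α⁻¹ : Rˣ) : R) * h + (a - α) * α.inv_mul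

theorem LinearMap.map_inv_pow_succ_smul_of_map_eq_smul {R M N : Type*} [CommRing R]
    [AddCommGroup M] [AddCommGroup N] [Module R M] [Module R N]
    (f : M →ₗ[R] N) {α : Rˣ} {x : M} {y : N} (h : f x = (α : R) • y) (k : ℕ) :
    f (((α⁻¹ : Rˣ) : R) ^ (k + 1) • x) = ((α⁻¹ : Rˣ) : R) ^ k • y := by
  rw [map_smul, h, smul_smul, pow_succ, mul_assoc, α.inv_mul, mul_one]

theorem LinearMap.map_sub_inv_smul_of_norm_relation {R M N P : Type*} [CommRing R]
    [AddCommGroup M] [AddCommGroup N] [AddCommGroup P]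
    [Module R M] [Module R N] [Module R P]
    {p : ℕ} {a : R} {α : Rˣ} (hα : (α : R) ^ 2 - a * α + p = 0)
    (ν : M →ₗ[R] N) (t : N →ₗ[R] M) (t' : P →ₗ[R] N)
    (hνt : ∀ n : N, ν (t n) = (p : R) • n)
    {θM : M} {θN : N} {θP : P} (hrel : ν θM = a • θN - t' θP) :
    ν (θM - ((α⁻¹ : Rˣ) : R) • t θN) = (α : R) • (θN - ((α⁻¹ : Rˣ) : R) • t' θP) := by
  rw [map_sub, map_smul, hνt, hrel, smul_smul,
    Units.inv_mul_eq_sub_of_sq_sub_mul_add_eq_zero hα, smul_sub, smul_smul, α.mul_inv,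
    one_smul, sub_smul]
  abel

/-- **Norm compatibility of `S`-refined Mazur–Tate elements (abstract form).**
Let `R` be a commutative ring, `p ∈ ℕ`, `a ∈ R`, and `α ∈ Rˣ` with
`α² - aα + p = 0`.  Let `ν : M → N`, `t : N → M`, `t' : P → N` be `R`-linear maps
with `ν ∘ t = p · id`.  If `θ_M, θ_N, θ_P` satisfy the norm relation
`ν(θ_M) = a·θ_N - t'(θ_P)`, then `ν(θ_M - α⁻¹·t(θ_N)) = α·(θ_N - α⁻¹·t'(θ_P))`,
and consequently
`ν(α^{-(k+1)}·(θ_M - α⁻¹·t(θ_N))) = α^{-k}·(θ_N - α⁻¹·t'(θ_P))` for all `k ≥ 0`. -/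
theorem refined_mazur_tate_norm_compatible (R : Type*) [CommRing R]
    (p : ℕ) (a : R) (α : Rˣ) (hα : (α : R) ^ 2 - a * (α : R) + (p : R) = 0)
    (M N P : Type*) [AddCommGroup M] [AddCommGroup N] [AddCommGroup P]
    [Module R M] [Module R N] [Module R P]
    (ν : M →ₗ[R] N) (t : N →ₗ[R] M) (t' : P →ₗ[R] N)
    (hνt : ∀ n : N, ν (t n) = (p : R) • n)
    (θM : M) (θN : N) (θP : P)
    (hrel : ν θM = a • θN - t' θP) :
    ν (θM - ((α⁻¹ : Rˣ) : R) • t θN)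
      = (α : R) • (θN - ((α⁻¹ : Rˣ) : R) • t' θP) ∧
    ∀ k : ℕ, ν ((((α⁻¹ : Rˣ) : R) ^ (k + 1)) • (θM - ((α⁻¹ : Rˣ) : R) • t θN))
      = (((α⁻¹ : Rˣ) : R) ^ k) • (θN - ((α⁻¹ : Rˣ) : R) • t' θP) := by
  have key := ν.map_sub_inv_smul_of_norm_relation hα t t' hνt hrel
  exact ⟨key, ν.map_inv_pow_succ_smul_of_map_eq_smul key⟩
end
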